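/- arXiv:1403.3314 — 2 statements merged into one kernel-verified Lean document; each statement's English description precedes it below -/
import Mathlib

section
/- For all real numbers r and s, the matrix exponential of the 4×4 real matrix ℓ₀(r,s) with rows (0,r,s,0), (0,0,0,r), (0,0,0,s), (0,0,0,0) equals the matrix M₀(r,s) with rows (1,r,s,(r²+s²)/2), (0,1,0,r), (0,0,1,s), (0,0,0,1). -/
/-!
`ℓ₀(r,s)` is nilpotent: its square has the single nonzero entry `r² + s²` in the corner and its
cube vanishes. The exponential series therefore stops after three terms, and
`exp ℓ₀(r,s) = 1 + ℓ₀(r,s) + ℓ₀(r,s)² / 2` is exactly `M₀(r,s)`.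
-/

open NormedSpace Finset
open scoped Nat

theorem NormedSpace.exp_eq_sum_range_of_pow_eq_zero (𝕂 : Type*) {𝔸 : Type*} [Field 𝕂]
    [CharZero 𝕂] [Ring 𝔸] [Algebra 𝕂 𝔸] [TopologicalSpace 𝔸] [IsTopologicalRing 𝔸]
    {a : 𝔸} {k : ℕ} (h : a ^ k = 0) :
    exp a = ∑ i ∈ range k, (i !⁻¹ : 𝕂) • a ^ i := by
  rw [exp_eq_tsum 𝕂]
  exact tsum_eq_sum fun i hi => by
    rw [pow_eq_zero_of_le (by simpa using hi) h, smul_zero]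

theorem NormedSpace.exp_eq_of_pow_three_eq_zero (𝕂 : Type*) {𝔸 : Type*} [Field 𝕂]
    [CharZero 𝕂] [Ring 𝔸] [Algebra 𝕂 𝔸] [TopologicalSpace 𝔸] [IsTopologicalRing 𝔸]
    {a : 𝔸} (h : a ^ 3 = 0) :
    exp a = 1 + a + (2⁻¹ : 𝕂) • a ^ 2 := by
  simp [exp_eq_sum_range_of_pow_eq_zero 𝕂 h, sum_range_succ]

section

variable {R : Type*} [CommRing R]

theorem ell₀_sq (r s : R) :
    (!![0, r, s, 0; 0, 0, 0, r; 0, 0, 0, s; 0, 0, 0, 0] : Matrix (Fin 4) (Fin 4) R) ^ 2 =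
      !![0, 0, 0, r ^ 2 + s ^ 2; 0, 0, 0, 0; 0, 0, 0, 0; 0, 0, 0, 0] := by
  ext i j
  fin_cases i <;> fin_cases j <;> simp [sq, Matrix.mul_apply, Fin.sum_univ_four]

theorem ell₀_pow_three (r s : R) :
    (!![0, r, s, 0; 0, 0, 0, r; 0, 0, 0, s; 0, 0, 0, 0] : Matrix (Fin 4) (Fin 4) R) ^ 3 = 0 := by
  rw [pow_succ, ell₀_sq]
  ext i j
  fin_cases i <;> fin_cases j <;> simp [Matrix.mul_apply, Fin.sum_univ_four]

end

/-- The matrix exponential of `ℓ₀(r,s)` equals `M₀(r,s)`. -/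
theorem stmt_7 (r s : ℝ) :
    NormedSpace.exp
      (!![0, r, s, 0;
          0, 0, 0, r;
          0, 0, 0, s;
          0, 0, 0, 0] : Matrix (Fin 4) (Fin 4) ℝ) =
    !![1, r, s, (r ^ 2 + s ^ 2) / 2;
       0, 1, 0, r;
       0, 0, 1, s;
       0, 0, 0, 1] := by
  rw [exp_eq_of_pow_three_eq_zero ℝ (ell₀_pow_three r s), ell₀_sq]
  ext i j
  fin_cases i <;> fin_cases j <;> simp [div_eq_inv_mul]
end

section
/- For every real t ≠ 0, the longitude matrix W_t = N_t·M_t⁻¹·N_t⁻¹·M_t²·N_t⁻¹·M_t⁻¹·N_t, where M_t is the 4×4 matrix with rows (1,0,1,t−1), (0,1,1,t), (0,0,1,t+1/2), (0,0,0,1) and N_t has rows (1,0,0,0), (2+1/t,1,0,0), (2,1,1,0), (1,1,0,1), has characteristic polynomial (X − 2t)³·(X − 1/(8t³)). In particular, for t > 0 the matrix W_t is unipotent if and only if t = 1/2. -/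
/-!
The longitude factors as the product of the commutators `[N, M⁻¹]` and `[M, N⁻¹]`. Multiplying
out, `W_t` is block upper triangular with lower diagonal block `2t • 1` and upper diagonal block
`[[a, b], [a - u, b + u]]`, where `u = 1/(8t³)` and `a + b = 2t`; that block has trace `2t + u`
and determinant `2tu`, whence the characteristic polynomial. `W_t - 1` is nilpotent iff the
characteristic polynomial is `(X - 1)⁴`, and evaluating at `2t` shows this forces `2t = 1`.
-/
open Polynomial

/-- The meridian matrix `M_t = ρ_t(m)`. -/
noncomputable def Mmat (t : ℝ) : Matrix (Fin 4) (Fin 4) ℝ :=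
  !![1, 0, 1, t - 1;
     0, 1, 1, t;
     0, 0, 1, t + 1 / 2;
     0, 0, 0, 1]

/-- The meridian matrix `N_t = ρ_t(n)`. -/
noncomputable def Nmat (t : ℝ) : Matrix (Fin 4) (Fin 4) ℝ :=
  !![1, 0, 0, 0;
     2 + 1 / t, 1, 0, 0;
     2, 1, 1, 0;
     1, 1, 0, 1]

/-- The longitude matrix `W_t = ρ_t(l)`, `l = n m⁻¹ n⁻¹ m² n⁻¹ m⁻¹ n`. -/
noncomputable def Wmat (t : ℝ) : Matrix (Fin 4) (Fin 4) ℝ :=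
  Nmat t * (Mmat t)⁻¹ * (Nmat t)⁻¹ * (Mmat t) ^ 2 * (Nmat t)⁻¹ * (Mmat t)⁻¹ * Nmat t

theorem charpoly_blockTriangular_fin_four {R : Type*} [CommRing R] (a b c d p q r s e f g h : R) :
    (!![a, b, p, q; c, d, r, s; 0, 0, e, f; 0, 0, g, h] : Matrix (Fin 4) (Fin 4) R).charpoly =
      (X ^ 2 - C (a + d) * X + C (a * d - b * c)) * (X ^ 2 - C (e + h) * X + C (e * h - f * g)) := by
  simp [Matrix.charpoly, Matrix.det_succ_row_zero, Fin.sum_univ_succ, Matrix.submatrix_apply,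
    Fin.succAbove, Matrix.charmatrix_apply]
  ring

theorem Matrix.isNilpotent_iff_charpoly {R n : Type*} [CommRing R] [IsDomain R] [Fintype n]
    [DecidableEq n] (A : Matrix n n R) : IsNilpotent A ↔ A.charpoly = X ^ Fintype.card n := by
  rw [← Matrix.isNilpotent_toLin'_iff, LinearMap.isNilpotent_iff_charpoly, Matrix.charpoly_toLin',
    Module.finrank_fintype_fun_eq_card]

theorem Matrix.isNilpotent_sub_one_iff_charpoly {R n : Type*} [CommRing R] [IsDomain R] [Fintype n]
    [DecidableEq n] (A : Matrix n n R) :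
    IsNilpotent (A - 1) ↔ A.charpoly = (X - 1) ^ Fintype.card n := by
  have h : X ^ Fintype.card n = taylor 1 ((X - 1 : R[X]) ^ Fintype.card n) := by
    rw [taylor_pow, map_sub, taylor_X, taylor_one, C_1, add_sub_cancel_right]
  rw [Matrix.isNilpotent_iff_charpoly, ← map_one (Matrix.scalar n), Matrix.charpoly_sub_scalar,
    ← taylor_apply, h, (taylor_injective 1).eq_iff]

section

variable {t : ℝ}

theorem Mmat_inv :
    (Mmat t)⁻¹ = !![1, 0, -1, 3 / 2; 0, 1, -1, 1 / 2; 0, 0, 1, -t - 1 / 2; 0, 0, 0, 1] := by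
  refine Matrix.inv_eq_right_inv ?_
  ext i j
  fin_cases i <;> fin_cases j <;> simp [Mmat, Matrix.mul_apply, Fin.sum_univ_four]
  ring

theorem Nmat_inv :
    (Nmat t)⁻¹ = !![1, 0, 0, 0; -2 - 1 / t, 1, 0, 0; 1 / t, -1, 1, 0; 1 + 1 / t, -1, 0, 1] := by
  refine Matrix.inv_eq_right_inv ?_
  ext i j
  fin_cases i <;> fin_cases j <;> simp [Nmat, Matrix.mul_apply, Fin.sum_univ_four] <;> ring

theorem Nmat_mul_Mmat_inv_mul_Nmat_inv_mul_Mmat (ht : t ≠ 0) :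
    Nmat t * (Mmat t)⁻¹ * (Nmat t)⁻¹ * Mmat t =
      !![5 / 2 + 1 / (2 * t), -1 / 2, 1 + 1 / (2 * t), t - 1 - 1 / (2 * t);
         7 / 2 + 2 / t + 1 / (2 * t ^ 2), 1 / 2 - 1 / (2 * t), 1 + 1 / (2 * t) + 1 / (2 * t ^ 2),
           t - 1 - 1 / (2 * t) - 1 / (2 * t ^ 2);
         2 - t, t, 0, 0;
         2, 0, 0, 0] := by
  rw [Mmat_inv, Nmat_inv]
  ext i j
  fin_cases i <;> fin_cases j <;> simp [Mmat, Nmat, Matrix.mul_apply, Fin.sum_univ_four] <;>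
    field_simp <;> ring

theorem Mmat_mul_Nmat_inv_mul_Mmat_inv_mul_Nmat (ht : t ≠ 0) :
    Mmat t * (Nmat t)⁻¹ * (Mmat t)⁻¹ * Nmat t =
      !![0, 0, 0, t;
         0, 0, 2, t - 2;
         1 - 3 / (4 * t), 1 + 3 / (4 * t), 1 - 3 / (2 * t), t + 3 / 2 + 9 / (4 * t);
         1 - 1 / (2 * t), 1 + 1 / (2 * t), -1 / t, 2 + 3 / (2 * t)] := by
  rw [Mmat_inv, Nmat_inv]
  ext i j
  fin_cases i <;> fin_cases j <;> simp [Mmat, Nmat, Matrix.mul_apply, Fin.sum_univ_four] <;>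
    field_simp <;> ring

theorem Wmat_eq_mul :
    Wmat t =
      (Nmat t * (Mmat t)⁻¹ * (Nmat t)⁻¹ * Mmat t) * (Mmat t * (Nmat t)⁻¹ * (Mmat t)⁻¹ * Nmat t) := by
  simp only [Wmat, sq, Matrix.mul_assoc]

theorem Wmat_eq (ht : t ≠ 0) :
    Wmat t =
      !![t - 1 / 2 - 1 / (4 * t) - 1 / (8 * t ^ 2), t + 1 / 2 + 1 / (4 * t) + 1 / (8 * t ^ 2),
           -1 - 1 / (4 * t ^ 2), 5 * t + 3 + 1 / (2 * t) + 3 / (8 * t ^ 2);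
         t - 1 / 2 - 1 / (4 * t) - 1 / (8 * t ^ 2) - 1 / (8 * t ^ 3),
           t + 1 / 2 + 1 / (4 * t) + 1 / (8 * t ^ 2) + 1 / (8 * t ^ 3),
           1 - 1 / t + 1 / (4 * t ^ 2) - 1 / (4 * t ^ 3),
           7 * t + 2 + 5 / (2 * t) + 1 / (8 * t ^ 2) + 3 / (8 * t ^ 3);
         0, 0, 2 * t, 0;
         0, 0, 0, 2 * t] := by
  rw [Wmat_eq_mul, Nmat_mul_Mmat_inv_mul_Nmat_inv_mul_Mmat ht,
    Mmat_mul_Nmat_inv_mul_Mmat_inv_mul_Nmat ht]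
  ext i j
  fin_cases i <;> fin_cases j <;> simp [Matrix.mul_apply, Fin.sum_univ_four] <;> field_simp <;> ring

theorem charpoly_Wmat (ht : t ≠ 0) :
    (Wmat t).charpoly = (X - C (2 * t)) ^ 3 * (X - C (1 / (8 * t ^ 3))) := by
  rw [Wmat_eq ht, charpoly_blockTriangular_fin_four]
  refine Polynomial.funext fun x => ?_
  simp only [eval_mul, eval_add, eval_sub, eval_pow, eval_X, eval_C]
  field_simp
  ring

theorem isNilpotent_Wmat_sub_one_iff (ht : t ≠ 0) : IsNilpotent (Wmat t - 1) ↔ t = 1 / 2 := by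
  rw [Matrix.isNilpotent_sub_one_iff_charpoly, charpoly_Wmat ht, Fintype.card_fin]
  constructor
  · intro h
    have h2t : (2 * t - 1) ^ 4 = 0 := by simpa using (congrArg (eval (2 * t)) h).symm
    linarith [pow_eq_zero_iff (n := 4) (by norm_num) |>.mp h2t]
  · rintro rfl
    norm_num
    ring

end

/-- For `t ≠ 0` the longitude matrix `W_t` has characteristic polynomial
`(X − 2t)³(X − 1/(8t³))`; in particular, for `t > 0`, `W_t` is unipotent iff `t = 1/2`. -/
theorem stmt_17 :
    (∀ t : ℝ, t ≠ 0 →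
      (Wmat t).charpoly = (X - C (2 * t)) ^ 3 * (X - C (1 / (8 * t ^ 3)))) ∧
    (∀ t : ℝ, 0 < t → (IsNilpotent (Wmat t - 1) ↔ t = 1 / 2)) :=
  ⟨fun _ ht => charpoly_Wmat ht, fun _ ht => isNilpotent_Wmat_sub_one_iff ht.ne'⟩
end
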